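/- arXiv:1005.1860 — 2 statements merged into one kernel-verified Lean document; each statement's English description precedes it below -/
import Mathlib

section
/- Let v* : S → ℝ be a fixed point of B and ρ a distribution on S. If v : S → ℝ is transitive-feasible, then ‖v − v*‖_{1,ρ} = ρᵀv − ρᵀv*, i.e., ∑_s ρ s * |v s − v* s| = ∑_s ρ s * (v s − v* s). -/
/-!
Comparison principle for the Bellman operator: if `m` is the minimum of `v - v*`, attained at
`s₀`, then monotonicity and `B (w + c) = B w + γ c` give
`v s₀ ≥ B v s₀ ≥ B v* s₀ + γ m = v* s₀ + γ m`, so `m ≥ γ m` and hence `m ≥ 0`.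
Thus `v ≥ v*` everywhere and the absolute values in the weighted `ℓ¹` distance can be dropped.
-/

open Finset

namespace MDP

variable {S A : Type*} [Fintype S] [Fintype A] [Nonempty A]
  (P : A → S → S → ℝ) (r : A → S → ℝ) (γ : ℝ)

noncomputable def bellman (v : S → ℝ) (s : S) : ℝ :=
  univ.sup' univ_nonempty fun a => r a s + γ * ∑ s', P a s s' * v s'

variable {P γ}

theorem bellman_mono (hP0 : ∀ a s s', 0 ≤ P a s s') (hγ0 : 0 ≤ γ) {v w : S → ℝ} (h : v ≤ w) :
    bellman P r γ v ≤ bellman P r γ w := by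
  intro s
  unfold bellman
  gcongr with a _ s'
  exacts [hP0 a s s', h s']

theorem bellman_add_const (hP1 : ∀ a s, ∑ s', P a s s' = 1) (v : S → ℝ) (c : ℝ) (s : S) :
    bellman P r γ (fun s' => v s' + c) s = bellman P r γ v s + γ * c := by
  simp only [bellman, sup'_add]
  congr 1
  funext a
  simp only [mul_add, sum_add_distrib, ← sum_mul, hP1, one_mul]
  ring

theorem le_of_le_bellman_of_bellman_le (hP0 : ∀ a s s', 0 ≤ P a s s')
    (hP1 : ∀ a s, ∑ s', P a s s' = 1) (hγ0 : 0 ≤ γ) (hγ1 : γ < 1) {v w : S → ℝ}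
    (hw : w ≤ bellman P r γ w) (hv : bellman P r γ v ≤ v) : w ≤ v := by
  intro s
  have : Nonempty S := ⟨s⟩
  obtain ⟨s₀, hs₀⟩ := Finite.exists_min fun s => v s - w s
  set m := v s₀ - w s₀
  have hshift : (fun s => w s + m) ≤ v := fun s => by linarith [hs₀ s]
  have hstep : w s₀ + γ * m ≤ v s₀ :=
    calc w s₀ + γ * m ≤ bellman P r γ w s₀ + γ * m := by linarith [hw s₀]
      _ = bellman P r γ (fun s => w s + m) s₀ := (bellman_add_const r hP1 w m s₀).symm
      _ ≤ bellman P r γ v s₀ := bellman_mono r hP0 hγ0 hshift s₀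
      _ ≤ v s₀ := hv s₀
  have hm : 0 ≤ m := (mul_nonneg_iff_of_pos_left (sub_pos.2 hγ1)).1 (by linarith)
  linarith [hs₀ s]

end MDP

theorem weighted_l1_eq_of_transitive_feasible_general
    {S A : Type*} [Fintype S] [Fintype A] [Nonempty A]
    (P : A → S → S → ℝ) (r : A → S → ℝ) (γ : ℝ)
    (hP0 : ∀ a s s', 0 ≤ P a s s') (hP1 : ∀ a s, ∑ s', P a s s' = 1)
    (hγ0 : 0 ≤ γ) (hγ1 : γ < 1)
    (B : (S → ℝ) → S → ℝ)
    (hB : ∀ v s, B v s =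
      Finset.univ.sup' Finset.univ_nonempty
        (fun a => r a s + γ * ∑ s', P a s s' * v s'))
    (vstar : S → ℝ) (hfix : B vstar = vstar)
    (ρ : S → ℝ)
    (v : S → ℝ) (hv : ∀ s, v s ≥ B v s) :
    ∑ s, ρ s * |v s - vstar s| = ∑ s, ρ s * (v s - vstar s) := by
  obtain rfl : B = MDP.bellman P r γ := funext fun v => funext (hB v)
  have hle : vstar ≤ v :=
    MDP.le_of_le_bellman_of_bellman_le r hP0 hP1 hγ0 hγ1 hfix.ge hv
  exact sum_congr rfl fun s _ => by rw [abs_of_nonneg (sub_nonneg.2 (hle s))]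

theorem weighted_l1_eq_of_transitive_feasible
    {S A : Type*} [Fintype S] [Nonempty S] [Fintype A] [Nonempty A]
    (P : A → S → S → ℝ) (r : A → S → ℝ) (γ : ℝ)
    (hP0 : ∀ a s s', 0 ≤ P a s s') (hP1 : ∀ a s, ∑ s', P a s s' = 1)
    (hγ0 : 0 ≤ γ) (hγ1 : γ < 1)
    (B : (S → ℝ) → S → ℝ)
    (hB : ∀ v s, B v s =
      Finset.univ.sup' Finset.univ_nonempty
        (fun a => r a s + γ * ∑ s', P a s s' * v s'))
    (vstar : S → ℝ) (hfix : B vstar = vstar)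
    (ρ : S → ℝ) (hρ0 : ∀ s, ρ s ≥ 0) (hρ1 : ∑ s, ρ s = 1)
    (v : S → ℝ) (hv : ∀ s, v s ≥ B v s) :
    ∑ s, ρ s * |v s - vstar s| = ∑ s, ρ s * (v s - vstar s) :=
  weighted_l1_eq_of_transitive_feasible_general P r γ hP0 hP1 hγ0 hγ1 B hB vstar hfix ρ v hv
end

section
/- (Offline error bound, full ALP.) Let v* : S → ℝ be a fixed point of B, ρ a distribution on S, and R a constant-closed set of functions S → ℝ. Suppose v̂ ∈ R is transitive-feasible and minimizes ρᵀ over all transitive-feasible elements of R (for every transitive-feasible u ∈ R, ρᵀv̂ ≤ ρᵀu). Then for every v ∈ R, ‖v̂ − v*‖_{1,ρ} ≤ (2/(1−γ)) * ‖v − v*‖_∞, where ‖v − v*‖_∞ = max_{s∈S} |v s − v* s|. -/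
/-!
The Bellman operator is monotone and shifts constants by a factor `γ`: `B (v + c) = B v + γ c`.
These two facts force every transitive-feasible `u` to dominate the fixed point `v*`, so the
`ρ`-weighted error of `v̂` is `ρᵀv̂ - ρᵀv*`. Given `v` with `‖v - v*‖_∞ ≤ ε`, the shifted function
`v + k` with `k = (1 + γ) ε / (1 - γ)` is transitive-feasible and lies in `R`, hence
`ρᵀv̂ - ρᵀv* ≤ ρᵀ(v + k) - ρᵀv* ≤ ε + k = 2 ε / (1 - γ)`.
-/

open Finset

noncomputable def bellman {S A : Type*} [Fintype S] [Fintype A] [Nonempty A]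
    (P : A → S → S → ℝ) (r : A → S → ℝ) (γ : ℝ) (v : S → ℝ) (s : S) : ℝ :=
  univ.sup' univ_nonempty fun a => r a s + γ * ∑ s', P a s s' * v s'

section Bellman

variable {S A : Type*} [Fintype S] [Fintype A] [Nonempty A]
  {P : A → S → S → ℝ} {r : A → S → ℝ} {γ : ℝ}

theorem bellman_mono (hP0 : ∀ a s s', 0 ≤ P a s s') (hγ0 : 0 ≤ γ) :
    Monotone (bellman P r γ) := fun _ _ hvw s =>
  sup'_mono_fun fun a _ => by
    gcongr with s'
    exacts [hP0 a s s', hvw s']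

theorem bellman_add_const (hP1 : ∀ a s, ∑ s', P a s s' = 1) (v : S → ℝ) (c : ℝ) (s : S) :
    bellman P r γ (fun s => v s + c) s = bellman P r γ v s + γ * c := by
  have hsum : ∀ a, ∑ s', P a s s' * (v s' + c) = ∑ s', P a s s' * v s' + c := fun a => by
    simp only [mul_add, sum_add_distrib, ← sum_mul, hP1, one_mul]
  simp only [bellman, hsum]
  simp only [mul_add, ← add_assoc, sup'_add]

end Bellman

section ShiftOperator

variable {S : Type*} {B : (S → ℝ) → S → ℝ} {γ : ℝ}

theorem fixedPoint_le_of_apply_le [Fintype S] [Nonempty S] (hmono : Monotone B)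
    (hshift : ∀ v c s, B (fun s => v s + c) s = B v s + γ * c) (hγ1 : γ < 1)
    {vstar u : S → ℝ} (hfix : B vstar = vstar) (hu : ∀ s, B u s ≤ u s) : vstar ≤ u := by
  set m := univ.sup' univ_nonempty fun s => vstar s - u s
  have hm : ∀ s, vstar s - u s ≤ m := fun s => le_sup' (fun s => vstar s - u s) (mem_univ s)
  have hmγ : m ≤ γ * m := sup'_le _ _ fun s _ => by
    have h := hmono (fun t => show vstar t ≤ u t + m by linarith [hm t]) s
    rw [hfix, hshift] at h
    linarith [hu s]
  have hm0 : m ≤ 0 := by nlinarith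
  exact fun s => by linarith [hm s]

theorem apply_add_const_le_of_abs_sub_le (hmono : Monotone B)
    (hshift : ∀ v c s, B (fun s => v s + c) s = B v s + γ * c)
    {vstar v : S → ℝ} (hfix : B vstar = vstar) {ε k : ℝ} (hv : ∀ s, |v s - vstar s| ≤ ε)
    (hk : (1 + γ) * ε ≤ (1 - γ) * k) (s : S) :
    B (fun s => v s + k) s ≤ v s + k := by
  have hv_le : v ≤ fun s => vstar s + ε := fun s => by linarith [(abs_le.mp (hv s)).2]
  have h := hmono hv_le s
  rw [hshift, hfix] at h
  rw [hshift]
  linarith [(abs_le.mp (hv s)).1]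

end ShiftOperator

theorem sum_mul_abs_sub_le {S : Type*} [Fintype S] {ρ : S → ℝ} (hρ0 : ∀ s, 0 ≤ ρ s)
    (hρ1 : ∑ s, ρ s = 1) {vstar vhat u : S → ℝ} {c : ℝ} (hle : vstar ≤ vhat)
    (hopt : ∑ s, ρ s * vhat s ≤ ∑ s, ρ s * u s) (hu : ∀ s, u s - vstar s ≤ c) :
    ∑ s, ρ s * |vhat s - vstar s| ≤ c :=
  calc ∑ s, ρ s * |vhat s - vstar s|
      = ∑ s, ρ s * vhat s - ∑ s, ρ s * vstar s := by
        rw [← sum_sub_distrib]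
        exact sum_congr rfl fun s _ => by rw [abs_of_nonneg (sub_nonneg.mpr (hle s))]; ring
    _ ≤ ∑ s, ρ s * u s - ∑ s, ρ s * vstar s := by linarith
    _ = ∑ s, ρ s * (u s - vstar s) := by rw [← sum_sub_distrib]; simp only [mul_sub]
    _ ≤ ∑ s, ρ s * c := sum_le_sum fun s _ => mul_le_mul_of_nonneg_left (hu s) (hρ0 s)
    _ = c := by rw [← sum_mul, hρ1, one_mul]

theorem offline_error_bound_full_ALP_general
    {S A : Type*} [Fintype S] [Nonempty S] [Fintype A] [Nonempty A]
    (P : A → S → S → ℝ) (r : A → S → ℝ) (γ : ℝ)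
    (hP0 : ∀ a s s', 0 ≤ P a s s') (hP1 : ∀ a s, ∑ s', P a s s' = 1)
    (hγ0 : 0 ≤ γ) (hγ1 : γ < 1)
    (B : (S → ℝ) → S → ℝ)
    (hB : ∀ v s, B v s =
      Finset.univ.sup' Finset.univ_nonempty
        (fun a => r a s + γ * ∑ s', P a s s' * v s'))
    (vstar : S → ℝ) (hfix : B vstar = vstar)
    (ρ : S → ℝ) (hρ0 : ∀ s, ρ s ≥ 0) (hρ1 : ∑ s, ρ s = 1)
    (R : Set (S → ℝ))
    (hR : ∀ u ∈ R, ∀ k : ℝ, (fun s => u s + k) ∈ R)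
    (vhat : S → ℝ) (hvhatTF : ∀ s, vhat s ≥ B vhat s)
    (hvhatOpt : ∀ u ∈ R, (∀ s, u s ≥ B u s) →
      ∑ s, ρ s * vhat s ≤ ∑ s, ρ s * u s) :
    ∀ v ∈ R,
      ∑ s, ρ s * |vhat s - vstar s| ≤
        (2 / (1 - γ)) *
          Finset.univ.sup' Finset.univ_nonempty (fun s => |v s - vstar s|) := by
  obtain rfl : B = bellman P r γ := funext fun v => funext (hB v)
  have hmono := bellman_mono (r := r) hP0 hγ0
  have hshift := bellman_add_const (r := r) (γ := γ) hP1
  intro v hv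
  set ε := univ.sup' univ_nonempty fun s => |v s - vstar s|
  have hvε : ∀ s, |v s - vstar s| ≤ ε := fun s => le_sup' (fun s => |v s - vstar s|) (mem_univ s)
  have h1γ : 0 < 1 - γ := sub_pos.mpr hγ1
  set k := (1 + γ) * ε / (1 - γ)
  have hk : (1 - γ) * k = (1 + γ) * ε := mul_div_cancel₀ _ h1γ.ne'
  have huTF := apply_add_const_le_of_abs_sub_le hmono hshift hfix hvε hk.ge
  refine sum_mul_abs_sub_le hρ0 hρ1 (fixedPoint_le_of_apply_le hmono hshift hγ1 hfix hvhatTF)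
    (hvhatOpt _ (hR v hv k) huTF) fun s => ?_
  have hε_eq : 2 / (1 - γ) * ε = ε + k := by field_simp; linarith
  linarith [(abs_le.mp (hvε s)).2]

theorem offline_error_bound_full_ALP
    {S A : Type*} [Fintype S] [Nonempty S] [Fintype A] [Nonempty A]
    (P : A → S → S → ℝ) (r : A → S → ℝ) (γ : ℝ)
    (hP0 : ∀ a s s', 0 ≤ P a s s') (hP1 : ∀ a s, ∑ s', P a s s' = 1)
    (hγ0 : 0 ≤ γ) (hγ1 : γ < 1)
    (B : (S → ℝ) → S → ℝ)
    (hB : ∀ v s, B v s =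
      Finset.univ.sup' Finset.univ_nonempty
        (fun a => r a s + γ * ∑ s', P a s s' * v s'))
    (vstar : S → ℝ) (hfix : B vstar = vstar)
    (ρ : S → ℝ) (hρ0 : ∀ s, ρ s ≥ 0) (hρ1 : ∑ s, ρ s = 1)
    (R : Set (S → ℝ))
    (hR : ∀ u ∈ R, ∀ k : ℝ, (fun s => u s + k) ∈ R)
    (vhat : S → ℝ) (hvhatR : vhat ∈ R) (hvhatTF : ∀ s, vhat s ≥ B vhat s)
    (hvhatOpt : ∀ u ∈ R, (∀ s, u s ≥ B u s) →
      ∑ s, ρ s * vhat s ≤ ∑ s, ρ s * u s) :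
    ∀ v ∈ R,
      ∑ s, ρ s * |vhat s - vstar s| ≤
        (2 / (1 - γ)) *
          Finset.univ.sup' Finset.univ_nonempty (fun s => |v s - vstar s|) :=
  offline_error_bound_full_ALP_general P r γ hP0 hP1 hγ0 hγ1 B hB vstar hfix ρ hρ0 hρ1 R hR vhat
    hvhatTF hvhatOpt
end
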